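/- arXiv:2404.17487 — 3 statements merged into one kernel-verified Lean document; each statement's English description precedes it below -/
import Mathlib

section
/- Let S be a real-valued random variable whose distribution is L-Lipschitz (meaning P(S ≤ q') − P(S ≤ q) ≤ L(q' − q) for all q ≤ q') and suppose P(S = t) = 0 for all t. Let q* be a (1−α)-quantile of S and define γ(q) = E[ℓ_α(q, S)] and γ'(q) = P(S ≤ q) − (1 − α). Then for every q ∈ ℝ, γ(q) − γ(q*) ≥ γ'(q)² / (2L). -/
open MeasureTheory

/-- The pinball loss at level `α`. -/
noncomputable def pinball (α q s : ℝ) : ℝ :=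
  if s ≤ q then α * (q - s) else (1 - α) * (s - q)

/-! With `F t = P(S ≤ t)`, Fubini makes `γ` an antiderivative of `γ' = F - (1 - α)`:
`γ b - γ a = ∫ t in a..b, γ' t`. The function `γ'` is monotone and `L`-Lipschitz, and it vanishes
at `q*`: the Lipschitz bound makes the CDF continuous, so the two quantile inequalities force
`F q* = 1 - α`. Between `q*` and `q` the integrand has constant sign, and on the stretch of length
`|γ' q| / L` ending at `q` its absolute value stays above a line of slope `L` dropping from
`|γ' q|` to zero, so `γ q - γ q*` is at least the area `γ' q ^ 2 / (2 L)` of that triangle. -/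

theorem pinball_eq (α q s : ℝ) : pinball α q s = max (q - s) 0 - (1 - α) * (q - s) := by
  unfold pinball
  split_ifs with h
  · rw [max_eq_left (by linarith)]; ring
  · rw [max_eq_right (by linarith)]; ring

namespace Monotone

variable {g : ℝ → ℝ} {L a : ℝ}

theorem sq_div_two_mul_le_integral_of_le (hg : Monotone g) (hL : 0 < L)
    (hLip : ∀ s t, s ≤ t → g t - g s ≤ L * (t - s)) (ha : g a = 0) {q : ℝ} (haq : a ≤ q) :
    g q ^ 2 / (2 * L) ≤ ∫ t in a..q, g t := by
  set d := g q / L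
  have hgq : 0 ≤ g q := ha ▸ hg haq
  have hd : d ≤ q - a := by
    rw [div_le_iff₀ hL]; linarith [hLip a q haq]
  have hint : ∀ x y, IntervalIntegrable g volume x y := fun _ _ => hg.intervalIntegrable
  rw [← intervalIntegral.integral_add_adjacent_intervals (hint a (q - d)) (hint _ q)]
  have h_left : 0 ≤ ∫ t in a..q - d, g t :=
    intervalIntegral.integral_nonneg (by linarith) fun t ht => ha ▸ hg ht.1
  have h_right : ∫ t in q - d..q, (g q - L * (q - t)) ≤ ∫ t in q - d..q, g t :=
    intervalIntegral.integral_mono_on (by linarith [div_nonneg hgq hL.le])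
      ((by fun_prop : Continuous fun t => g q - L * (q - t)).intervalIntegrable _ _)
      (hint _ _) fun t ht => by linarith [hLip t q ht.2]
  have h_line : ∫ t in q - d..q, (g q - L * (q - t)) = g q ^ 2 / (2 * L) := by
    simp only [intervalIntegral.integral_sub intervalIntegrable_const
      ((intervalIntegrable_const.sub intervalIntegral.intervalIntegrable_id).const_mul L),
      intervalIntegral.integral_const_mul, intervalIntegral.integral_const, integral_id,
      intervalIntegral.integral_sub intervalIntegrable_const intervalIntegral.intervalIntegrable_id,
      smul_eq_mul, d]
    field_simp
    ring
  linarith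

theorem sq_div_two_mul_le_integral (hg : Monotone g) (hL : 0 < L)
    (hLip : ∀ s t, s ≤ t → g t - g s ≤ L * (t - s)) (ha : g a = 0) (q : ℝ) :
    g q ^ 2 / (2 * L) ≤ ∫ t in a..q, g t := by
  rcases le_total a q with haq | hqa
  · exact hg.sq_div_two_mul_le_integral_of_le hL hLip ha haq
  · -- reflect: `t ↦ -g (-t)` satisfies the same hypotheses, with zero at `-a ≤ -q`
    have hg' : Monotone fun t => -g (-t) := fun s t hst => neg_le_neg (hg (neg_le_neg hst))
    have := hg'.sq_div_two_mul_le_integral_of_le hL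
      (fun s t hst => by linarith [hLip (-t) (-s) (neg_le_neg hst)]) (by simp [ha])
      (neg_le_neg hqa)
    rwa [intervalIntegral.integral_neg, intervalIntegral.integral_comp_neg, neg_neg, neg_neg,
      neg_sq, intervalIntegral.integral_symm, neg_neg] at this

end Monotone

theorem intervalIntegral_indicator_Ici_one (s a b : ℝ) :
    ∫ t in a..b, (Set.Ici s).indicator 1 t = max (b - s) 0 - max (a - s) 0 := by
  have hIoi : ∀ x, ∫ t in s..x, (Set.Ioi s).indicator (1 : ℝ → ℝ) t = max (x - s) 0 := by
    intro x
    rcases le_total s x with hsx | hxs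
    · rw [max_eq_left (by linarith),
        intervalIntegral.integral_congr_ae (f := (Set.Ioi s).indicator 1) (g := fun _ => 1)
        (.of_forall fun t ht => Set.indicator_of_mem (Set.uIoc_of_le hsx ▸ ht).1 _)]
      simp
    · rw [max_eq_right (by linarith),
        intervalIntegral.integral_congr_ae (f := (Set.Ioi s).indicator 1) (g := fun _ => 0)
        (.of_forall fun t ht => Set.indicator_of_notMem (Set.uIoc_of_ge hxs ▸ ht).2.not_gt _)]
      simp
  have hint : ∀ x y, IntervalIntegrable ((Set.Ioi s).indicator (1 : ℝ → ℝ)) volume x y := by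
    intro x y
    have h1 : IntervalIntegrable (1 : ℝ → ℝ) volume x y := intervalIntegrable_const
    exact ⟨h1.1.indicator measurableSet_Ioi, h1.2.indicator measurableSet_Ioi⟩
  rw [intervalIntegral.integral_congr_ae
      ((indicator_ae_eq_of_ae_eq_set Ioi_ae_eq_Ici).symm.mono fun _ h _ => h),
    ← intervalIntegral.integral_interval_sub_left (hint s b) (hint s a), hIoi, hIoi]

section CDF

variable {Ω : Type*} [MeasurableSpace Ω] {μ : Measure Ω} {S : Ω → ℝ}

theorem monotone_measureReal_setOf_le [IsFiniteMeasure μ] :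
    Monotone fun t => μ.real {ω | S ω ≤ t} :=
  fun _ _ hst => measureReal_mono fun _ hω => le_trans hω hst

theorem integral_max_sub_sub_integral_max_sub
    [IsFiniteMeasure μ] (hS : Measurable S) (hSi : Integrable S μ) (a b : ℝ) :
    ∫ ω, max (b - S ω) 0 ∂μ - ∫ ω, max (a - S ω) 0 ∂μ = ∫ t in a..b, μ.real {ω | S ω ≤ t} := by
  have hprod : Integrable (Function.uncurry fun t ω => (Set.Ici (S ω)).indicator (1 : ℝ → ℝ) t)
      ((volume.restrict (Set.uIoc a b)).prod μ) := by
    have hmeas : MeasurableSet {p : ℝ × Ω | S p.2 ≤ p.1} :=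
      measurableSet_le (hS.comp measurable_snd) measurable_fst
    have : IsFiniteMeasure (volume.restrict (Set.uIoc a b)) :=
      isFiniteMeasure_restrict.2 measure_Ioc_lt_top.ne
    exact (integrable_const (1 : ℝ)).indicator hmeas
  calc ∫ ω, max (b - S ω) 0 ∂μ - ∫ ω, max (a - S ω) 0 ∂μ
      = ∫ ω, (∫ t in a..b, (Set.Ici (S ω)).indicator 1 t) ∂μ := by
        simp only [intervalIntegral_indicator_Ici_one]
        exact (integral_sub ((integrable_const b).sub hSi).pos_part
          ((integrable_const a).sub hSi).pos_part).symm
    _ = ∫ t in a..b, ∫ ω, (Set.Ici (S ω)).indicator 1 t ∂μ :=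
        (intervalIntegral_integral_swap hprod).symm
    _ = ∫ t in a..b, μ.real {ω | S ω ≤ t} := by
        congr with t
        exact integral_indicator_one (hS measurableSet_Iic)

theorem measureReal_setOf_le_eq_of_isQuantile [IsProbabilityMeasure μ] (hS : Measurable S)
    {L α c : ℝ} (hL : 0 < L)
    (hLip : ∀ q q', q ≤ q' → μ.real {ω | S ω ≤ q'} - μ.real {ω | S ω ≤ q} ≤ L * (q' - q))
    (h_le : 1 - α ≤ μ.real {ω | S ω ≤ c}) (h_ge : α ≤ μ.real {ω | c ≤ S ω}) :
    μ.real {ω | S ω ≤ c} = 1 - α := by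
  refine le_antisymm (le_of_forall_pos_le_add fun ε hε => ?_) h_le
  have hδ : 0 < ε / L := div_pos hε hL
  have h_below : μ.real {ω | S ω ≤ c - ε / L} ≤ 1 - α := by
    calc μ.real {ω | S ω ≤ c - ε / L} ≤ μ.real {ω | c ≤ S ω}ᶜ :=
          measureReal_mono fun ω (hω : S ω ≤ c - ε / L) (h : c ≤ S ω) => by linarith
      _ ≤ 1 - α := by
          rw [probReal_compl_eq_one_sub (measurableSet_le measurable_const hS)]; linarith
  have := hLip (c - ε / L) c (by linarith)
  rw [sub_sub_cancel, mul_div_cancel₀ _ hL.ne'] at this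
  linarith

theorem integrable_pinball [IsFiniteMeasure μ] (hSi : Integrable S μ) (α q : ℝ) :
    Integrable (fun ω => pinball α q (S ω)) μ := by
  simp only [pinball_eq]
  exact ((integrable_const q).sub hSi).pos_part.sub (((integrable_const q).sub hSi).const_mul _)

theorem integral_pinball_sub_integral_pinball [IsProbabilityMeasure μ] (hS : Measurable S)
    (hSi : Integrable S μ) (α a b : ℝ) :
    ∫ ω, pinball α b (S ω) ∂μ - ∫ ω, pinball α a (S ω) ∂μ
      = ∫ t in a..b, (μ.real {ω | S ω ≤ t} - (1 - α)) := by
  have hmax : ∀ q, Integrable (fun ω => max (q - S ω) 0) μ :=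
    fun q => ((integrable_const q).sub hSi).pos_part
  calc ∫ ω, pinball α b (S ω) ∂μ - ∫ ω, pinball α a (S ω) ∂μ
      = ∫ ω, (max (b - S ω) 0 - max (a - S ω) 0 - (b - a) * (1 - α)) ∂μ := by
        rw [← integral_sub (integrable_pinball hSi α b) (integrable_pinball hSi α a)]
        congr with ω
        rw [pinball_eq, pinball_eq]
        ring
    _ = ∫ ω, max (b - S ω) 0 ∂μ - ∫ ω, max (a - S ω) 0 ∂μ - (b - a) * (1 - α) := by
        have hdiff : Integrable (fun ω => max (b - S ω) 0 - max (a - S ω) 0) μ :=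
          (hmax b).sub (hmax a)
        rw [integral_sub hdiff (integrable_const _), integral_sub (hmax b) (hmax a),
          integral_const, probReal_univ, one_smul]
    _ = ∫ t in a..b, (μ.real {ω | S ω ≤ t} - (1 - α)) := by
        rw [integral_max_sub_sub_integral_max_sub hS hSi, intervalIntegral.integral_sub
          monotone_measureReal_setOf_le.intervalIntegrable intervalIntegrable_const,
          intervalIntegral.integral_const, smul_eq_mul]

end CDF

theorem pinball_suboptimality_lower_bound_general
    {Ω : Type*} [MeasurableSpace Ω] (μ : Measure Ω) [IsProbabilityMeasure μ]
    (S : Ω → ℝ) (hSmeas : Measurable S) (hS01 : ∀ᵐ ω ∂μ, S ω ∈ Set.Icc (0:ℝ) 1)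
    (L : ℝ) (hL : 0 < L)
    (hLip : ∀ q q' : ℝ, q ≤ q' →
      (μ {ω | S ω ≤ q'}).toReal - (μ {ω | S ω ≤ q}).toReal ≤ L * (q' - q))
    (α : ℝ)
    (qstar : ℝ)
    (hq1 : (μ {ω | S ω ≤ qstar}).toReal ≥ 1 - α)
    (hq2 : (μ {ω | qstar ≤ S ω}).toReal ≥ α)
    (γ γ' : ℝ → ℝ)
    (hγ : ∀ q, γ q = ∫ ω, pinball α q (S ω) ∂μ)
    (hγ' : ∀ q, γ' q = (μ {ω | S ω ≤ q}).toReal - (1 - α)) :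
    ∀ q : ℝ, γ q - γ qstar ≥ (γ' q) ^ 2 / (2 * L) := by
  obtain rfl := funext hγ
  obtain rfl := funext hγ'
  have hSi : Integrable S μ := .of_bound hSmeas.aestronglyMeasurable 1 <|
    hS01.mono fun ω hω => by rw [Real.norm_eq_abs, abs_le]; constructor <;> linarith [hω.1, hω.2]
  have hzero : (μ {ω | S ω ≤ qstar}).toReal - (1 - α) = 0 := by
    rw [sub_eq_zero]; exact measureReal_setOf_le_eq_of_isQuantile hSmeas hL hLip hq1 hq2
  intro q
  rw [ge_iff_le, integral_pinball_sub_integral_pinball hSmeas hSi]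
  have hmono : Monotone fun t => (μ {ω | S ω ≤ t}).toReal - (1 - α) :=
    fun s t hst => sub_le_sub_right (monotone_measureReal_setOf_le hst) _
  exact hmono.sq_div_two_mul_le_integral hL
    (fun s t hst => by linarith [hLip s t hst]) hzero q

/-- If the law of `S` is `L`-Lipschitz and atomless, `q*` is a `(1−α)`-quantile of `S`,
`γ(q) = E[ℓ_α(q,S)]` and `γ'(q) = P(S ≤ q) − (1−α)`, then
`γ(q) − γ(q*) ≥ γ'(q)²/(2L)` for every `q`. -/
theorem pinball_suboptimality_lower_bound
    {Ω : Type*} [MeasurableSpace Ω] (μ : Measure Ω) [IsProbabilityMeasure μ]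
    (S : Ω → ℝ) (hSmeas : Measurable S) (hS01 : ∀ᵐ ω ∂μ, S ω ∈ Set.Icc (0:ℝ) 1)
    (L : ℝ) (hL : 0 < L)
    (hLip : ∀ q q' : ℝ, q ≤ q' →
      (μ {ω | S ω ≤ q'}).toReal - (μ {ω | S ω ≤ q}).toReal ≤ L * (q' - q))
    (hatomless : ∀ t : ℝ, μ {ω | S ω = t} = 0)
    (α : ℝ) (hα : α ∈ Set.Ioo (0:ℝ) 1)
    (qstar : ℝ)
    (hq1 : (μ {ω | S ω ≤ qstar}).toReal ≥ 1 - α)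
    (hq2 : (μ {ω | qstar ≤ S ω}).toReal ≥ α)
    (γ γ' : ℝ → ℝ)
    (hγ : ∀ q, γ q = ∫ ω, pinball α q (S ω) ∂μ)
    (hγ' : ∀ q, γ' q = (μ {ω | S ω ≤ q}).toReal - (1 - α)) :
    ∀ q : ℝ, γ q - γ qstar ≥ (γ' q) ^ 2 / (2 * L) :=
  pinball_suboptimality_lower_bound_general μ S hSmeas hS01 L hL hLip α qstar hq1 hq2 γ γ' hγ hγ'
end

section
/- Let Q be an integrable real-valued random variable with mean μ and finite variance. For any integer m ≥ 2, there exist real numbers q₁, …, q_m such that E[min_{1 ≤ i ≤ m} |Q − q_i|] ≤ 2√(Var(Q)/(m−1)). -/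
/-!
Cut `[c - η, c + η]` into `n` subintervals of length `2η/n` and add `c` itself as an
`(n+1)`-st level. A point within `η` of `c` is within `η/n` of a subinterval midpoint, and a
point farther away is within `|x - c| ≤ (x - c)²/η` of `c`. Hence the distance to the nearest
level is at most `η/n + (x - c)²/η`; integrating gives `η/n + V/η` with `V = E[(Q - c)²]`, and
`η = √(nV)` balances the two terms to `2√(V/n)`.
-/

open MeasureTheory

noncomputable section

/-- The midpoint of the `k`-th of `n` equal subintervals of `[c - η, c + η]`. -/
def gridCenter (c η : ℝ) (n k : ℕ) : ℝ := c - η + (2 * k + 1) * η / n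

def quantLevels (c η : ℝ) (n : ℕ) : Fin (n + 1) → ℝ :=
  Fin.lastCases c fun k => gridCenter c η n k

end

lemma exists_abs_sub_nat_add_half_le {y : ℝ} {n : ℕ} (hn : 0 < n) (hy₀ : 0 ≤ y) (hyn : y ≤ n) :
    ∃ k < n, |y - (k + 1 / 2)| ≤ 1 / 2 := by
  refine ⟨min ⌊y⌋₊ (n - 1), by omega, abs_le.mpr ?_⟩
  have hfloor := Nat.floor_le hy₀
  have hfloor' := Nat.lt_floor_add_one y
  rcases le_total ⌊y⌋₊ (n - 1) with h | h
  · rw [min_eq_left h]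
    constructor <;> linarith
  · have h' : ((n - 1 : ℕ) : ℝ) ≤ ⌊y⌋₊ := by exact_mod_cast h
    rw [min_eq_right h]
    push_cast [Nat.cast_sub hn] at h' ⊢
    constructor <;> linarith

lemma exists_abs_sub_gridCenter_le {c η x : ℝ} {n : ℕ} (hη : 0 < η) (hn : 0 < n)
    (hx : |x - c| ≤ η) : ∃ k < n, |x - gridCenter c η n k| ≤ η / n := by
  have hn' : (0 : ℝ) < n := by exact_mod_cast hn
  obtain ⟨hx₁, hx₂⟩ := abs_le.mp hx
  obtain ⟨k, hk, hy⟩ := exists_abs_sub_nat_add_half_le (y := (x - c + η) * n / (2 * η)) hn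
    (div_nonneg (mul_nonneg (by linarith) hn'.le) (by positivity))
    (by rw [div_le_iff₀ (by positivity)]; nlinarith)
  refine ⟨k, hk, ?_⟩
  have hrescale : x - gridCenter c η n k = 2 * η / n * ((x - c + η) * n / (2 * η) - (k + 1 / 2)) := by
    unfold gridCenter
    field_simp
    ring
  calc |x - gridCenter c η n k| = 2 * η / n * |(x - c + η) * n / (2 * η) - (k + 1 / 2)| := by
        rw [hrescale, abs_mul, abs_of_pos (by positivity)]
    _ ≤ 2 * η / n * (1 / 2) := by gcongr
    _ = η / n := by ring

lemma iInf_abs_sub_quantLevels_le_abs_sub (c η x : ℝ) (n : ℕ) :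
    ⨅ i : Fin (n + 1), |x - quantLevels c η n i| ≤ |x - c| := by
  calc ⨅ i : Fin (n + 1), |x - quantLevels c η n i| ≤ |x - quantLevels c η n (Fin.last n)| :=
        ciInf_le (Set.finite_range _).bddBelow _
    _ = |x - c| := by rw [quantLevels, Fin.lastCases_last]

lemma iInf_abs_sub_quantLevels_le {c η : ℝ} {n : ℕ} (hη : 0 < η) (hn : 0 < n) (x : ℝ) :
    ⨅ i : Fin (n + 1), |x - quantLevels c η n i| ≤ η / n + (x - c) ^ 2 / η := by
  rcases le_or_gt |x - c| η with hnear | hfar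
  · obtain ⟨k, hk, hxk⟩ := exists_abs_sub_gridCenter_le hη hn hnear
    calc ⨅ i : Fin (n + 1), |x - quantLevels c η n i| ≤ |x - quantLevels c η n (Fin.castSucc ⟨k, hk⟩)| :=
          ciInf_le (Set.finite_range _).bddBelow _
      _ = |x - gridCenter c η n k| := by rw [quantLevels, Fin.lastCases_castSucc]
      _ ≤ η / n := hxk
      _ ≤ η / n + (x - c) ^ 2 / η := le_add_of_nonneg_right (by positivity)
  · calc ⨅ i : Fin (n + 1), |x - quantLevels c η n i| ≤ |x - c| := iInf_abs_sub_quantLevels_le_abs_sub c η x n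
      _ ≤ (x - c) ^ 2 / η := by
          rw [le_div_iff₀ hη, ← sq_abs]
          nlinarith [abs_nonneg (x - c)]
      _ ≤ η / n + (x - c) ^ 2 / η := le_add_of_nonneg_left (by positivity)

section Integral

variable {Ω : Type*} [MeasurableSpace Ω] {μ : Measure Ω} {Q : Ω → ℝ} {c : ℝ}

lemma integral_iInf_abs_sub_quantLevels_le [IsProbabilityMeasure μ] {η : ℝ} {n : ℕ}
    (hQ : Integrable (fun ω => (Q ω - c) ^ 2) μ) (hη : 0 < η) (hn : 0 < n) :
    ∫ ω, ⨅ i : Fin (n + 1), |Q ω - quantLevels c η n i| ∂μ ≤ η / n + (∫ ω, (Q ω - c) ^ 2 ∂μ) / η := by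
  have hbound : Integrable (fun ω => η / n + (Q ω - c) ^ 2 / η) μ :=
    (integrable_const _).add (hQ.div_const η)
  calc ∫ ω, ⨅ i : Fin (n + 1), |Q ω - quantLevels c η n i| ∂μ ≤ ∫ ω, (η / n + (Q ω - c) ^ 2 / η) ∂μ :=
        integral_mono_of_nonneg (ae_of_all _ fun _ => Real.iInf_nonneg fun _ => abs_nonneg _)
          hbound (ae_of_all _ fun _ => iInf_abs_sub_quantLevels_le hη hn _)
    _ = η / n + (∫ ω, (Q ω - c) ^ 2 ∂μ) / η := by
        rw [integral_add (integrable_const _) (hQ.div_const η), integral_const, integral_div]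
        simp

lemma integral_iInf_abs_sub_quantLevels_eq_zero (hQ : Integrable (fun ω => (Q ω - c) ^ 2) μ)
    (h₀ : ∫ ω, (Q ω - c) ^ 2 ∂μ = 0) (η : ℝ) (n : ℕ) :
    ∫ ω, ⨅ i : Fin (n + 1), |Q ω - quantLevels c η n i| ∂μ = 0 := by
  have hQc : ∀ᵐ ω ∂μ, (Q ω - c) ^ 2 = 0 :=
    (integral_eq_zero_iff_of_nonneg (fun _ => sq_nonneg _) hQ).mp h₀
  refine integral_eq_zero_of_ae ?_
  filter_upwards [hQc] with ω hω
  refine le_antisymm ?_ (Real.iInf_nonneg fun _ => abs_nonneg _)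
  simpa [pow_eq_zero_iff two_ne_zero |>.mp hω] using
    iInf_abs_sub_quantLevels_le_abs_sub c η (Q ω) n

end Integral

lemma sqrt_mul_div_add_div_sqrt_mul {a V : ℝ} (ha : 0 < a) (hV : 0 < V) :
    √(a * V) / a + V / √(a * V) = 2 * √(V / a) := by
  have hsa := Real.sq_sqrt ha.le
  have hsV := Real.sq_sqrt hV.le
  have : 0 < √a := Real.sqrt_pos.mpr ha
  have : 0 < √V := Real.sqrt_pos.mpr hV
  rw [Real.sqrt_mul ha.le, Real.sqrt_div hV.le]
  field_simp
  linear_combination √V ^ 2 * hsa - a * hsV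

theorem quantization_error_bound_general
    {Ω : Type*} [MeasurableSpace Ω] (μ : Measure Ω) [IsProbabilityMeasure μ]
    (Q : Ω → ℝ)
    (μQ : ℝ)
    (hvar : Integrable (fun ω => (Q ω - μQ) ^ 2) μ)
    (m : ℕ) (hm : 2 ≤ m) :
    ∃ q : Fin m → ℝ,
      ∫ ω, (⨅ i : Fin m, |Q ω - q i|) ∂μ ≤
        2 * Real.sqrt ((∫ ω, (Q ω - μQ) ^ 2 ∂μ) / (m - 1)) := by
  obtain ⟨n, rfl⟩ : ∃ n, m = n + 1 := ⟨m - 1, by omega⟩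
  have hn : 0 < n := by omega
  have hcast : ((n + 1 : ℕ) : ℝ) - 1 = n := by push_cast; ring
  rw [hcast]
  rcases (integral_nonneg fun ω => sq_nonneg (Q ω - μQ) : 0 ≤ ∫ ω, (Q ω - μQ) ^ 2 ∂μ).eq_or_lt
    with hV | hV
  · refine ⟨quantLevels μQ 1 n, ?_⟩
    rw [integral_iInf_abs_sub_quantLevels_eq_zero hvar hV.symm]
    positivity
  · set V := ∫ ω, (Q ω - μQ) ^ 2 ∂μ
    refine ⟨quantLevels μQ √(n * V) n, ?_⟩
    calc ∫ ω, ⨅ i, |Q ω - quantLevels μQ √(n * V) n i| ∂μ ≤ √(n * V) / n + V / √(n * V) :=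
          integral_iInf_abs_sub_quantLevels_le hvar (by positivity) hn
      _ = 2 * √(V / n) := sqrt_mul_div_add_div_sqrt_mul (by positivity) hV

/-- Quantization bound: for an integrable random variable `Q` with finite variance and
any `m ≥ 2`, there exist levels `q₁, …, q_m` with
`E[minᵢ |Q − qᵢ|] ≤ 2√(Var(Q)/(m−1))`. -/
theorem quantization_error_bound
    {Ω : Type*} [MeasurableSpace Ω] (μ : Measure Ω) [IsProbabilityMeasure μ]
    (Q : Ω → ℝ) (hQmeas : Measurable Q) (hQint : Integrable Q μ)
    (μQ : ℝ) (hμQ : μQ = ∫ ω, Q ω ∂μ)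
    (hvar : Integrable (fun ω => (Q ω - μQ) ^ 2) μ)
    (m : ℕ) (hm : 2 ≤ m) :
    ∃ q : Fin m → ℝ,
      ∫ ω, (⨅ i : Fin m, |Q ω - q i|) ∂μ ≤
        2 * Real.sqrt ((∫ ω, (Q ω - μQ) ^ 2 ∂μ) / (m - 1)) :=
  quantization_error_bound_general μ Q μQ hvar m hm
end

section
/- Let (X, S) be random variables with S ∈ [0,1] a.s. and conditional quantile function q_{1−α}(x) having finite variance Var(q_{1−α}(X)). For any m ≥ 2, the gap between the minimum over all measurable h : 𝒳 → Δ_m and q ∈ ℝ^m of E[Σ_i h^i(X) ℓ_α(q_i, S)] and the optimum E[ℓ_α(q_{1−α}(X), S)] satisfies 0 ≤ min − optimum ≤ 2√(Var(q_{1−α}(X))/(m−1)). -/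
/-!
For each `x` the conditional `(1 - α)`-quantile minimises `q ↦ E[ℓ_α(q, S) | X = x]`, because
`α - 1{S > q₀}` (or `α - 1{S ≥ q₀}`) is a subgradient of the loss whose mean has the right sign;
so no soft assignment `∑ᵢ hⁱ(x) ℓ_α(qᵢ, S)` beats it, and the gap is nonnegative.

For the upper bound, assign `x` to the grid cell of `q_{1−α}(x)` on a grid of `m` points with
spacing `δ` centred at `μq`. As `ℓ_α` is 1-Lipschitz in `q`, the excess risk is at most the mean
quantisation error `δ + E[(|q_{1−α}(X) - μq| - (m-1)δ/2)⁺]`, and `(|d| - R)⁺ ≤ d² / (4R)` bounds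
this by `δ + Var / (2(m-1)δ)` with `Var = E[(q_{1−α}(X) - μq)²]`. Optimising over `δ` gives
`√(2 Var / (m - 1)) ≤ 2 √(Var / (m - 1))`.
-/

open MeasureTheory ProbabilityTheory
open scoped BigOperators

open Set

section Pinball

variable {α : ℝ}

lemma pinball_nonneg (h0 : 0 ≤ α) (h1 : α ≤ 1) (q s : ℝ) : 0 ≤ pinball α q s := by
  unfold pinball; split_ifs <;> nlinarith

lemma pinball_le_abs_sub (h0 : 0 ≤ α) (h1 : α ≤ 1) (q s : ℝ) : pinball α q s ≤ |s - q| := by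
  unfold pinball; split_ifs with h
  · rw [abs_of_nonpos (by linarith)]; nlinarith
  · rw [abs_of_nonneg (by linarith)]; nlinarith

lemma abs_pinball_le_of_mem_Icc (h0 : 0 ≤ α) (h1 : α ≤ 1) (q : ℝ) {s : ℝ}
    (hs : s ∈ Icc (0 : ℝ) 1) : |pinball α q s| ≤ |q| + 1 := by
  rw [abs_of_nonneg (pinball_nonneg h0 h1 q s)]
  calc pinball α q s ≤ |s - q| := pinball_le_abs_sub h0 h1 q s
    _ ≤ |s| + |q| := abs_sub _ _
    _ ≤ |q| + 1 := by rw [abs_of_nonneg hs.1]; linarith [hs.2]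

lemma pinball_le_add_abs_sub (h0 : 0 ≤ α) (h1 : α ≤ 1) (q q' s : ℝ) :
    pinball α q s ≤ pinball α q' s + |q - q'| := by
  unfold pinball
  rcases abs_cases (q - q') with ⟨he, _⟩ | ⟨he, _⟩ <;> split_ifs <;> rw [he] <;> nlinarith [h0, h1]

/-- `α - 1_A(s)` is a subgradient of `pinball α · s` at `q₀`. -/
lemma sub_indicator_mul_le_pinball_sub {q₀ : ℝ} {A : Set ℝ} (hA : Ioi q₀ ⊆ A) (hA' : A ⊆ Ici q₀)
    (q s : ℝ) :
    (α - A.indicator 1 s) * (q - q₀) ≤ pinball α q s - pinball α q₀ s := by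
  by_cases hs : s ∈ A
  · have := hA' hs
    simp only [mem_Ici] at this
    rw [indicator_of_mem hs, Pi.one_apply]; unfold pinball; split_ifs <;> nlinarith
  · have : s ≤ q₀ := not_lt.1 fun h => hs (hA h)
    rw [indicator_of_notMem hs]; unfold pinball; split_ifs <;> nlinarith

@[fun_prop]
lemma Measurable.pinball {β : Type*} [MeasurableSpace β] {f g : β → ℝ} (hf : Measurable f)
    (hg : Measurable g) : Measurable fun x => pinball α (f x) (g x) :=
  Measurable.ite (measurableSet_le hg hf) (by fun_prop) (by fun_prop)

end Pinball

section Measure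

variable {α : ℝ} {ν : Measure ℝ}

lemma integrable_id_of_ae_mem_Icc [IsFiniteMeasure ν] (hν : ∀ᵐ s ∂ν, s ∈ Icc (0 : ℝ) 1) :
    Integrable id ν :=
  .of_bound measurable_id.aestronglyMeasurable 1 <| hν.mono fun s hs => by
    rw [id, Real.norm_eq_abs, abs_of_nonneg hs.1]; exact hs.2

lemma integrable_pinball_s11 [IsFiniteMeasure ν] (h0 : 0 ≤ α) (h1 : α ≤ 1) (hν : Integrable id ν)
    (q : ℝ) : Integrable (pinball α q) ν :=
  ((hν.sub (integrable_const q)).abs).mono' (by fun_prop) <| ae_of_all _ fun s => by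
    rw [Real.norm_eq_abs, abs_of_nonneg (pinball_nonneg h0 h1 q s)]
    exact pinball_le_abs_sub h0 h1 q s

variable [IsProbabilityMeasure ν]

lemma integral_pinball_le_add_abs_sub (h0 : 0 ≤ α) (h1 : α ≤ 1) (hν : Integrable id ν)
    (q q' : ℝ) : ∫ s, pinball α q s ∂ν ≤ ∫ s, pinball α q' s ∂ν + |q - q'| := by
  calc ∫ s, pinball α q s ∂ν ≤ ∫ s, (pinball α q' s + |q - q'|) ∂ν :=
        integral_mono (integrable_pinball_s11 h0 h1 hν q)
          ((integrable_pinball_s11 h0 h1 hν q').add (integrable_const _))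
          (pinball_le_add_abs_sub h0 h1 q q')
    _ = ∫ s, pinball α q' s ∂ν + |q - q'| := by
        rw [integral_add (integrable_pinball_s11 h0 h1 hν q') (integrable_const _), integral_const,
          probReal_univ, one_smul]

lemma sub_measureReal_mul_le_integral_pinball_sub (h0 : 0 ≤ α) (h1 : α ≤ 1)
    (hν : Integrable id ν) {q₀ : ℝ} {A : Set ℝ} (hAm : MeasurableSet A) (hA : Ioi q₀ ⊆ A)
    (hA' : A ⊆ Ici q₀) (q : ℝ) :
    (α - ν.real A) * (q - q₀) ≤ ∫ s, pinball α q s ∂ν - ∫ s, pinball α q₀ s ∂ν := by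
  have hind : Integrable (A.indicator (1 : ℝ → ℝ)) ν := (integrable_const 1).indicator hAm
  rw [← integral_sub (integrable_pinball_s11 h0 h1 hν q) (integrable_pinball_s11 h0 h1 hν q₀)]
  calc (α - ν.real A) * (q - q₀) = ∫ s, (α - A.indicator 1 s) * (q - q₀) ∂ν := by
        rw [integral_mul_const, integral_sub (integrable_const _) hind, integral_const,
          integral_indicator_one hAm, probReal_univ, one_smul]
    _ ≤ _ := integral_mono (((integrable_const _).sub hind).mul_const _)
        ((integrable_pinball_s11 h0 h1 hν q).sub (integrable_pinball_s11 h0 h1 hν q₀))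
        (sub_indicator_mul_le_pinball_sub hA hA' q)

theorem integral_pinball_quantile_le (h0 : 0 ≤ α) (h1 : α ≤ 1) (hν : Integrable id ν)
    {q₀ : ℝ} (hlo : 1 - α ≤ ν.real (Iic q₀)) (hhi : α ≤ ν.real (Ici q₀)) (q : ℝ) :
    ∫ s, pinball α q₀ s ∂ν ≤ ∫ s, pinball α q s ∂ν := by
  rcases le_total q₀ q with hq | hq
  · have hgap := sub_measureReal_mul_le_integral_pinball_sub (q₀ := q₀) h0 h1 hν
      measurableSet_Ioi subset_rfl Ioi_subset_Ici_self q
    have hIoi : ν.real (Ioi q₀) ≤ α := by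
      rw [← compl_Iic, measureReal_compl measurableSet_Iic, probReal_univ]; linarith
    nlinarith
  · have hgap := sub_measureReal_mul_le_integral_pinball_sub (q₀ := q₀) h0 h1 hν
      measurableSet_Ici Ioi_subset_Ici_self subset_rfl q
    nlinarith

lemma integral_pinball_quantile_le_integral_sum_mul (h0 : 0 ≤ α) (h1 : α ≤ 1)
    (hν : Integrable id ν) {q₀ : ℝ} (hlo : 1 - α ≤ ν.real (Iic q₀)) (hhi : α ≤ ν.real (Ici q₀))
    {ι : Type*} [Fintype ι] {w : ι → ℝ} (hw : w ∈ stdSimplex ℝ ι) (q : ι → ℝ) :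
    ∫ s, pinball α q₀ s ∂ν ≤ ∫ s, ∑ i, w i * pinball α (q i) s ∂ν := by
  rw [integral_finsetSum _ fun i _ => (integrable_pinball_s11 h0 h1 hν (q i)).const_mul _]
  simp only [integral_const_mul]
  calc ∫ s, pinball α q₀ s ∂ν = ∑ i, w i * ∫ s, pinball α q₀ s ∂ν := by
        rw [← Finset.sum_mul, hw.2, one_mul]
    _ ≤ ∑ i, w i * ∫ s, pinball α (q i) s ∂ν := Finset.sum_le_sum fun i _ =>
        mul_le_mul_of_nonneg_left (integral_pinball_quantile_le h0 h1 hν hlo hhi _) (hw.1 i)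

end Measure

section Kernel

variable {𝒳 : Type*} [MeasurableSpace 𝒳] {μ : Measure 𝒳}

lemma integrable_integral_kernel_of_ae_norm_le {𝒴 E : Type*} [MeasurableSpace 𝒴]
    [NormedAddCommGroup E] [NormedSpace ℝ E] {κ : Kernel 𝒳 𝒴} [IsMarkovKernel κ]
    {F : 𝒳 → 𝒴 → E} (hF : StronglyMeasurable (Function.uncurry F)) {g : 𝒳 → ℝ}
    (hg : Integrable g μ) (hFg : ∀ᵐ x ∂μ, ∀ᵐ y ∂κ x, ‖F x y‖ ≤ g x) :
    Integrable (fun x => ∫ y, F x y ∂κ x) μ :=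
  hg.mono' hF.integral_kernel_prod_right.aestronglyMeasurable <| hFg.mono fun x hx => by
    simpa using norm_integral_le_of_norm_le_const hx

variable [IsFiniteMeasure μ] {κ : Kernel 𝒳 ℝ} [IsMarkovKernel κ] {α : ℝ}

lemma integrable_integral_pinball (h0 : 0 ≤ α) (h1 : α ≤ 1)
    (hκ : ∀ᵐ x ∂μ, ∀ᵐ s ∂κ x, s ∈ Icc (0 : ℝ) 1) {f : 𝒳 → ℝ} (hf : Measurable f)
    (hfi : Integrable f μ) : Integrable (fun x => ∫ s, pinball α (f x) s ∂κ x) μ :=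
  integrable_integral_kernel_of_ae_norm_le (by fun_prop) (hfi.abs.add (integrable_const 1)) <|
    hκ.mono fun x hx => hx.mono fun s hs => abs_pinball_le_of_mem_Icc h0 h1 (f x) hs

lemma integrable_integral_sum_mul_pinball (h0 : 0 ≤ α) (h1 : α ≤ 1)
    (hκ : ∀ᵐ x ∂μ, ∀ᵐ s ∂κ x, s ∈ Icc (0 : ℝ) 1) {ι : Type*} [Fintype ι] {w : 𝒳 → ι → ℝ}
    (hw : Measurable w) (hwΔ : ∀ x, w x ∈ stdSimplex ℝ ι) (q : ι → ℝ) :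
    Integrable (fun x => ∫ s, ∑ i, w x i * pinball α (q i) s ∂κ x) μ := by
  refine integrable_integral_kernel_of_ae_norm_le (g := fun _ => ∑ i, (|q i| + 1))
    (by fun_prop) (integrable_const _) (hκ.mono fun x hx => hx.mono fun s hs => ?_)
  refine (norm_sum_le _ _).trans (Finset.sum_le_sum fun i _ => ?_)
  have hwi := mem_Icc_of_mem_stdSimplex (hwΔ x) i
  rw [norm_mul, Real.norm_eq_abs, Real.norm_eq_abs, abs_of_nonneg hwi.1]
  exact (mul_le_of_le_one_left (abs_nonneg _) hwi.2).trans (abs_pinball_le_of_mem_Icc h0 h1 _ hs)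

theorem integral_integral_pinball_quantile_le (h0 : 0 ≤ α) (h1 : α ≤ 1)
    (hκ : ∀ᵐ x ∂μ, ∀ᵐ s ∂κ x, s ∈ Icc (0 : ℝ) 1) {f : 𝒳 → ℝ} (hf : Measurable f)
    (hfi : Integrable f μ)
    (hquant : ∀ᵐ x ∂μ, 1 - α ≤ (κ x).real (Iic (f x)) ∧ α ≤ (κ x).real (Ici (f x)))
    {ι : Type*} [Fintype ι] {w : 𝒳 → ι → ℝ} (hw : Measurable w)
    (hwΔ : ∀ x, w x ∈ stdSimplex ℝ ι) (q : ι → ℝ) :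
    ∫ x, ∫ s, pinball α (f x) s ∂κ x ∂μ ≤ ∫ x, ∫ s, ∑ i, w x i * pinball α (q i) s ∂κ x ∂μ :=
  integral_mono_ae (integrable_integral_pinball h0 h1 hκ hf hfi)
    (integrable_integral_sum_mul_pinball h0 h1 hκ hw hwΔ q) <|
    (hκ.and hquant).mono fun x ⟨hx, hlo, hhi⟩ =>
      integral_pinball_quantile_le_integral_sum_mul h0 h1 (integrable_id_of_ae_mem_Icc hx) hlo hhi
        (hwΔ x) q

lemma integral_integral_pinball_le_add_integral (h0 : 0 ≤ α) (h1 : α ≤ 1)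
    (hκ : ∀ᵐ x ∂μ, ∀ᵐ s ∂κ x, s ∈ Icc (0 : ℝ) 1) {f g b : 𝒳 → ℝ} (hf : Measurable f)
    (hg : Measurable g) (hgi : Integrable g μ) (hb : Integrable b μ)
    (hfg : ∀ x, |f x - g x| ≤ b x) :
    ∫ x, ∫ s, pinball α (f x) s ∂κ x ∂μ ≤ ∫ x, ∫ s, pinball α (g x) s ∂κ x ∂μ + ∫ x, b x ∂μ := by
  have hfi : Integrable f μ :=
    (hgi.abs.add hb).mono' hf.aestronglyMeasurable <| ae_of_all _ fun x => by
      rw [Real.norm_eq_abs, Pi.add_apply]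
      linarith [abs_sub_abs_le_abs_sub (f x) (g x), hfg x]
  have hFg := integrable_integral_pinball h0 h1 hκ hg hgi
  calc ∫ x, ∫ s, pinball α (f x) s ∂κ x ∂μ ≤ ∫ x, (∫ s, pinball α (g x) s ∂κ x + b x) ∂μ :=
        integral_mono_ae (integrable_integral_pinball h0 h1 hκ hf hfi) (hFg.add hb) <|
          hκ.mono fun x hx => (integral_pinball_le_add_abs_sub h0 h1
            (integrable_id_of_ae_mem_Icc hx) (f x) (g x)).trans (add_le_add le_rfl (hfg x))
    _ = _ := integral_add hFg hb

end Kernel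

section Quantization

lemma abs_sub_min_floor_le (N : ℕ) (u : ℝ) :
    |u - (min N ⌊u⌋₊ : ℕ)| ≤ 1 + max (|u - N / 2| - N / 2) 0 := by
  have hN : (0 : ℝ) ≤ N := N.cast_nonneg
  rcases lt_or_ge u 0 with hu | hu
  · rw [Nat.floor_eq_zero.2 (by linarith), min_zero, Nat.cast_zero, sub_zero, abs_of_neg hu,
      abs_of_neg (by linarith)]
    linarith [le_max_left (-(u - N / 2) - N / 2) 0]
  rcases le_total ⌊u⌋₊ N with hn | hn
  · rw [min_eq_right hn, abs_of_nonneg (by linarith [Nat.floor_le hu])]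
    linarith [Nat.lt_floor_add_one u, le_max_right (|u - N / 2| - N / 2) 0]
  · have hNu : (N : ℝ) ≤ u := (Nat.cast_le.2 hn).trans (Nat.floor_le hu)
    rw [min_eq_left hn, abs_of_nonneg (by linarith), abs_of_nonneg (by linarith)]
    linarith [le_max_left (u - N / 2 - N / 2) 0]

noncomputable def gridPoint (N : ℕ) (μ δ : ℝ) (j : Fin (N + 1)) : ℝ := μ + ((j : ℕ) - N / 2) * δ

/-- The index of the last grid point at or below `t` (the first one if there is none). -/
noncomputable def gridIndex (N : ℕ) (μ δ t : ℝ) : Fin (N + 1) :=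
  ⟨min N ⌊(t - μ) / δ + N / 2⌋₊, Nat.lt_succ_of_le (min_le_left _ _)⟩

lemma measurable_gridIndex (N : ℕ) (μ δ : ℝ) : Measurable (gridIndex N μ δ) :=
  (measurable_from_top (f := fun n : ℕ => (⟨min N n, Nat.lt_succ_of_le (min_le_left _ _)⟩ :
    Fin (N + 1)))).comp (Nat.measurable_floor.comp (by fun_prop))

lemma abs_sub_gridPoint_gridIndex_le (N : ℕ) (μ : ℝ) {δ : ℝ} (hδ : 0 < δ) (t : ℝ) :
    |t - gridPoint N μ δ (gridIndex N μ δ t)| ≤ δ + max (|t - μ| - N * δ / 2) 0 := by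
  set u := (t - μ) / δ + N / 2
  have ht : t - μ = (u - N / 2) * δ := by simp only [u]; field_simp; ring
  have hgrid : t - gridPoint N μ δ (gridIndex N μ δ t) = (u - (min N ⌊u⌋₊ : ℕ)) * δ := by
    simp only [gridPoint, gridIndex]; linear_combination ht
  calc |t - gridPoint N μ δ (gridIndex N μ δ t)| = |u - (min N ⌊u⌋₊ : ℕ)| * δ := by
        rw [hgrid, abs_mul, abs_of_pos hδ]
    _ ≤ (1 + max (|u - N / 2| - N / 2) 0) * δ :=
        mul_le_mul_of_nonneg_right (abs_sub_min_floor_le N u) hδ.le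
    _ = δ + max (|t - μ| - N * δ / 2) 0 := by
        rw [add_mul, one_mul, max_mul_of_nonneg _ _ hδ.le, zero_mul, ht, abs_mul, abs_of_pos hδ]
        ring_nf

end Quantization

lemma max_abs_sub_le_sq_div {R : ℝ} (hR : 0 < R) (d : ℝ) : max (|d| - R) 0 ≤ d ^ 2 / (4 * R) := by
  rw [max_le_iff, le_div_iff₀ (by positivity)]
  exact ⟨by nlinarith [sq_nonneg (|d| - 2 * R), sq_abs d], by positivity⟩

lemma le_two_mul_sqrt_of_forall_le_add_div {x a : ℝ} (ha : 0 ≤ a)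
    (h : ∀ δ > 0, x ≤ δ + a / δ) : x ≤ 2 * √a := by
  rcases ha.eq_or_lt with rfl | ha
  · simpa using le_of_forall_pos_le_add fun δ hδ => by simpa using h δ hδ
  · calc x ≤ √a + a / √a := h _ (Real.sqrt_pos.2 ha)
      _ = 2 * √a := by rw [Real.div_sqrt]; ring

lemma csInf_sub_nonneg_and_le_two_mul_sqrt {S : Set ℝ} {b a : ℝ} (hlb : ∀ v ∈ S, b ≤ v)
    (ha : 0 ≤ a) (hub : ∀ δ > 0, ∃ v ∈ S, v - b ≤ δ + a / δ) :
    0 ≤ sInf S - b ∧ sInf S - b ≤ 2 * √a := by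
  obtain ⟨v, hv, -⟩ := hub 1 one_pos
  refine ⟨sub_nonneg.2 (le_csInf ⟨v, hv⟩ hlb), le_two_mul_sqrt_of_forall_le_add_div ha ?_⟩
  intro δ hδ
  obtain ⟨v, hv, hvb⟩ := hub δ hδ
  linarith [csInf_le ⟨b, hlb⟩ hv]

section Risk

variable {𝒳 : Type*} [MeasurableSpace 𝒳] {μ : Measure 𝒳}

lemma integrable_max_abs_sub_sub {f : 𝒳 → ℝ} (hf : Measurable f) {c R : ℝ} (hR : 0 < R)
    (hsq : Integrable (fun x => (f x - c) ^ 2) μ) :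
    Integrable (fun x => max (|f x - c| - R) 0) μ :=
  (hsq.div_const _).mono' (by fun_prop) <| ae_of_all _ fun x => by
    rw [Real.norm_eq_abs, abs_of_nonneg (le_max_right _ _)]
    exact max_abs_sub_le_sq_div hR (f x - c)

lemma integral_max_abs_sub_sub_le {f : 𝒳 → ℝ} (hf : Measurable f) {c R : ℝ} (hR : 0 < R)
    (hsq : Integrable (fun x => (f x - c) ^ 2) μ) :
    ∫ x, max (|f x - c| - R) 0 ∂μ ≤ (∫ x, (f x - c) ^ 2 ∂μ) / (4 * R) :=
  (integral_mono (integrable_max_abs_sub_sub hf hR hsq) (hsq.div_const _)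
    fun x => max_abs_sub_le_sq_div hR (f x - c)).trans_eq (integral_div _ _)

variable [IsProbabilityMeasure μ] {κ : Kernel 𝒳 ℝ} [IsMarkovKernel κ] {α : ℝ}

/-- Witnessed by the hard assignment of `x` to the grid cell of `f x`, on the grid of `N + 1`
points with spacing `δ` centred at `c`. -/
theorem exists_grid_assignment_integral_sub_le (h0 : 0 ≤ α) (h1 : α ≤ 1)
    (hκ : ∀ᵐ x ∂μ, ∀ᵐ s ∂κ x, s ∈ Icc (0 : ℝ) 1) {f : 𝒳 → ℝ} (hf : Measurable f)
    (hfi : Integrable f μ) (c : ℝ) (hsq : Integrable (fun x => (f x - c) ^ 2) μ) {N : ℕ}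
    (hN : 0 < N) {δ : ℝ} (hδ : 0 < δ) :
    ∃ (w : 𝒳 → Fin (N + 1) → ℝ) (q : Fin (N + 1) → ℝ), Measurable w ∧
      (∀ x, w x ∈ stdSimplex ℝ (Fin (N + 1))) ∧
      ∫ x, ∫ s, ∑ i, w x i * pinball α (q i) s ∂κ x ∂μ - ∫ x, ∫ s, pinball α (f x) s ∂κ x ∂μ
        ≤ δ + (∫ x, (f x - c) ^ 2 ∂μ) / (2 * N) / δ := by
  set j := fun x => gridIndex N c δ (f x)
  have hj : Measurable j := (measurable_gridIndex N c δ).comp hf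
  refine ⟨fun x => Pi.single (j x) 1, gridPoint N c δ,
    (measurable_from_top (f := fun k => (Pi.single k 1 : Fin (N + 1) → ℝ))).comp hj,
    fun x => single_mem_stdSimplex ℝ _, ?_⟩
  have hsingle : ∀ x s, ∑ i, (Pi.single (j x) 1 : Fin (N + 1) → ℝ) i *
      pinball α (gridPoint N c δ i) s = pinball α (gridPoint N c δ (j x)) s := by
    simp [Pi.single_apply]
  simp only [hsingle]
  have hR : (0 : ℝ) < N * δ / 2 := by positivity
  have htail := integrable_max_abs_sub_sub hf hR hsq
  have hquant := integral_integral_pinball_le_add_integral h0 h1 hκ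
    (f := fun x => gridPoint N c δ (j x)) (b := fun x => δ + max (|f x - c| - N * δ / 2) 0)
    ((measurable_from_top (f := gridPoint N c δ)).comp hj) hf hfi
    ((integrable_const δ).add htail)
    fun x => (abs_sub_comm _ _).trans_le (abs_sub_gridPoint_gridIndex_le N c hδ (f x))
  rw [integral_add (integrable_const δ) htail, integral_const, probReal_univ, one_smul] at hquant
  calc _ ≤ δ + (∫ x, (f x - c) ^ 2 ∂μ) / (4 * (N * δ / 2)) := by
        linarith [integral_max_abs_sub_sub_le hf hR hsq]
    _ = _ := by field_simp; ring

end Risk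

theorem plcp_population_gap_general
    {𝒳 : Type*} [MeasurableSpace 𝒳] (μX : Measure 𝒳) [IsProbabilityMeasure μX]
    (κ : Kernel 𝒳 ℝ) [IsMarkovKernel κ]
    (hsupp : ∀ᵐ x ∂μX, (κ x) (Set.Icc (0:ℝ) 1)ᶜ = 0)
    (α : ℝ) (hα : α ∈ Set.Ioo (0:ℝ) 1)
    (qf : 𝒳 → ℝ) (hqfmeas : Measurable qf)
    (hqf : ∀ᵐ x ∂μX, ((κ x) (Set.Iic (qf x))).toReal ≥ 1 - α ∧
      ((κ x) (Set.Ici (qf x))).toReal ≥ α)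
    (μq : ℝ)
    (hvar : Integrable (fun x => (qf x - μq) ^ 2) μX)
    (m : ℕ) (hm : 2 ≤ m)
    (V opt : ℝ)
    (hV : V = sInf {v : ℝ | ∃ (h : 𝒳 → Fin m → ℝ) (q : Fin m → ℝ),
      Measurable h ∧ (∀ x, h x ∈ stdSimplex ℝ (Fin m)) ∧
      v = ∫ x, ∫ s, ∑ i : Fin m, h x i * pinball α (q i) s ∂(κ x) ∂μX})
    (hopt : opt = ∫ x, ∫ s, pinball α (qf x) s ∂(κ x) ∂μX) :
    0 ≤ V - opt ∧
      V - opt ≤ 2 * Real.sqrt ((∫ x, (qf x - μq) ^ 2 ∂μX) / (m - 1)) := by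
  obtain ⟨h0, h1⟩ := And.imp le_of_lt le_of_lt hα
  obtain ⟨N, rfl⟩ : ∃ N, m = N + 1 := ⟨m - 1, by omega⟩
  have hN : 0 < N := by omega
  have hκ : ∀ᵐ x ∂μX, ∀ᵐ s ∂κ x, s ∈ Icc (0 : ℝ) 1 := hsupp.mono fun x hx => ae_iff.2 hx
  have hqfi : Integrable qf μX := by
    have := ((memLp_two_iff_integrable_sq (by fun_prop)).2 hvar).integrable one_le_two
    exact (this.add (integrable_const μq)).congr (ae_of_all _ fun x => by simp)
  have hσ : 0 ≤ ∫ x, (qf x - μq) ^ 2 ∂μX := integral_nonneg fun x => sq_nonneg _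
  rw [hV, hopt]
  refine (csInf_sub_nonneg_and_le_two_mul_sqrt (a := (∫ x, (qf x - μq) ^ 2 ∂μX) / (2 * N)) ?_
    (by positivity) fun δ hδ => ?_).imp_right fun h => h.trans ?_
  · rintro v ⟨w, q, hw, hwΔ, rfl⟩
    exact integral_integral_pinball_quantile_le h0 h1 hκ hqfmeas hqfi hqf hw hwΔ q
  · obtain ⟨w, q, hw, hwΔ, hgap⟩ :=
      exists_grid_assignment_integral_sub_le h0 h1 hκ hqfmeas hqfi μq hvar hN hδ
    exact ⟨_, ⟨w, q, hw, hwΔ, rfl⟩, hgap⟩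
  · push_cast
    rw [add_sub_cancel_right]
    gcongr
    linarith [(Nat.one_le_cast (α := ℝ)).2 hN]

/-- Theorem 4.2: the gap between the best `m`-group objective
`min_{h : 𝒳 → Δ_m, q ∈ ℝ^m} E[Σᵢ hⁱ(X) ℓ_α(qᵢ, S)]` and the optimum
`E[ℓ_α(q_{1−α}(X), S)]` is nonnegative and at most `2√(Var(q_{1−α}(X))/(m−1))`. -/
theorem plcp_population_gap
    {𝒳 : Type*} [MeasurableSpace 𝒳] (μX : Measure 𝒳) [IsProbabilityMeasure μX]
    (κ : Kernel 𝒳 ℝ) [IsMarkovKernel κ]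
    (hsupp : ∀ᵐ x ∂μX, (κ x) (Set.Icc (0:ℝ) 1)ᶜ = 0)
    (α : ℝ) (hα : α ∈ Set.Ioo (0:ℝ) 1)
    (qf : 𝒳 → ℝ) (hqfmeas : Measurable qf)
    (hqf : ∀ᵐ x ∂μX, ((κ x) (Set.Iic (qf x))).toReal ≥ 1 - α ∧
      ((κ x) (Set.Ici (qf x))).toReal ≥ α)
    (μq : ℝ) (hμq : μq = ∫ x, qf x ∂μX)
    (hvar : Integrable (fun x => (qf x - μq) ^ 2) μX)
    (m : ℕ) (hm : 2 ≤ m)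
    (V opt : ℝ)
    (hV : V = sInf {v : ℝ | ∃ (h : 𝒳 → Fin m → ℝ) (q : Fin m → ℝ),
      Measurable h ∧ (∀ x, h x ∈ stdSimplex ℝ (Fin m)) ∧
      v = ∫ x, ∫ s, ∑ i : Fin m, h x i * pinball α (q i) s ∂(κ x) ∂μX})
    (hopt : opt = ∫ x, ∫ s, pinball α (qf x) s ∂(κ x) ∂μX) :
    0 ≤ V - opt ∧
      V - opt ≤ 2 * Real.sqrt ((∫ x, (qf x - μq) ^ 2 ∂μX) / (m - 1)) :=
  plcp_population_gap_general μX κ hsupp α hα qf hqfmeas hqf μq hvar m hm V opt hV hopt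
end
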